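/- arXiv:1401.5345 — 2 statements merged into one kernel-verified Lean document; each statement's English description precedes it below -/
import Mathlib

section
/- Let p be a prime, r ≥ 0, and let F(q,N) = ∑_{n=0}^N (q;q)_n ∈ ℤ[q]. Then for every p-th root of unity ζ and all m ≥ (r+1)p, the value of ((q·d/dq)^r F(q,m)) at q = ζ equals the value of ((q·d/dq)^r F(q,(r+1)p-1)) at q = ζ. -/
/-!
Once `n ≥ k p`, the product `(q;q)_n` contains the factors `1 - q^(j p)` for `j ≤ k`, each divisible
by `1 - q^p`, so `(1 - q^p)^k ∣ (q;q)_n`. Each application of `θ = q d/dq` lowers the exponent of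
such a power divisor by at most one, so after `r` applications the tail `∑_{n ≥ (r+1)p} (q;q)_n`
is still divisible by `1 - q^p`, which vanishes at every `p`-th root of unity.
-/

open Polynomial Finset

namespace Polynomial

variable {R : Type*}

noncomputable def eulerOperator (R : Type*) [CommSemiring R] : R[X] →ₗ[R] R[X] :=
  LinearMap.mulLeft R X ∘ₗ derivative

theorem eulerOperator_apply [CommSemiring R] (g : R[X]) :
    eulerOperator R g = X * derivative g :=
  rfl

theorem pow_dvd_eulerOperator_of_pow_succ_dvd [CommSemiring R] {a g : R[X]} {s : ℕ}
    (h : a ^ (s + 1) ∣ g) : a ^ s ∣ eulerOperator R g := by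
  obtain ⟨c, rfl⟩ := h
  rw [eulerOperator_apply, derivative_mul, derivative_pow]
  refine (dvd_add ?_ ?_).mul_left X
  · exact ((dvd_mul_left _ _).mul_right _).mul_right _
  · exact (pow_dvd_pow a s.le_succ).mul_right _

theorem pow_dvd_iterate_eulerOperator [CommSemiring R] {a g : R[X]} {s : ℕ} (r : ℕ)
    (h : a ^ (s + r) ∣ g) : a ^ s ∣ (eulerOperator R)^[r] g := by
  induction r generalizing g with
  | zero => exact h
  | succ r ih =>
    rw [Function.iterate_succ_apply]
    exact ih (pow_dvd_eulerOperator_of_pow_succ_dvd h)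

noncomputable def qPochhammer (R : Type*) [CommRing R] (n : ℕ) : R[X] :=
  ∏ i ∈ range n, (1 - X ^ (i + 1))

theorem one_sub_X_pow_pow_dvd_qPochhammer [CommRing R] {p : ℕ} (hp : 0 < p) (k : ℕ) :
    (1 - X ^ p : R[X]) ^ k ∣ qPochhammer R (k * p) := by
  induction k with
  | zero => simp
  | succ k ih =>
    rw [qPochhammer, Nat.succ_mul, prod_range_add, pow_succ]
    refine mul_dvd_mul ih ?_
    -- the last factor of the new block is `1 - X ^ ((k + 1) * p)`
    have hlast : k * p + (p - 1) + 1 = p * (k + 1) := by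
      rw [add_assoc, Nat.sub_add_cancel hp]; ring
    have hdvd : (1 - X ^ p : R[X]) ∣ 1 - X ^ (k * p + (p - 1) + 1) := by
      simpa [hlast, pow_mul] using sub_dvd_pow_sub_pow (1 : R[X]) (X ^ p) (k + 1)
    exact hdvd.trans (dvd_prod_of_mem _ (mem_range.2 (Nat.sub_lt hp one_pos)))

theorem one_sub_X_pow_pow_dvd_qPochhammer_of_le [CommRing R] {p k n : ℕ} (hp : 0 < p)
    (hn : k * p ≤ n) : (1 - X ^ p : R[X]) ^ k ∣ qPochhammer R n :=
  (one_sub_X_pow_pow_dvd_qPochhammer hp k).trans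
    (prod_dvd_prod_of_subset _ _ _ (range_subset_range.2 hn))

theorem eval_eq_zero_of_one_sub_X_pow_dvd [CommRing R] {p : ℕ} {f : R[X]} {ζ : R}
    (hf : 1 - X ^ p ∣ f) (hζ : ζ ^ p = 1) : f.eval ζ = 0 :=
  eval_eq_zero_of_dvd_of_eval_eq_zero hf (by simp [hζ])

theorem eval_iterate_eulerOperator_sum_qPochhammer_eq [CommRing R] {p : ℕ} (hp : 0 < p)
    (r : ℕ) {ζ : R} (hζ : ζ ^ p = 1) {m : ℕ} (hm : (r + 1) * p ≤ m) :
    ((eulerOperator R)^[r] (∑ n ∈ range (m + 1), qPochhammer R n)).eval ζ =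
      ((eulerOperator R)^[r] (∑ n ∈ range ((r + 1) * p), qPochhammer R n)).eval ζ := by
  have htail : (1 - X ^ p : R[X]) ^ (1 + r) ∣
      ∑ n ∈ range (m + 1), qPochhammer R n - ∑ n ∈ range ((r + 1) * p), qPochhammer R n := by
    rw [← sum_Ico_eq_sub _ (by omega)]
    exact dvd_sum fun n hn ↦ one_sub_X_pow_pow_dvd_qPochhammer_of_le hp
      (by rw [add_comm]; exact (mem_Ico.1 hn).1)
  rw [← sub_eq_zero, ← eval_sub, ← Module.End.pow_apply, ← Module.End.pow_apply, ← map_sub,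
    Module.End.pow_apply]
  exact eval_eq_zero_of_one_sub_X_pow_dvd (by simpa using pow_dvd_iterate_eulerOperator r htail) hζ

end Polynomial

/-- For F(q,N) = ∑_{n=0}^N (q;q)_n, any p-th root of unity ζ and m ≥ (r+1)p,
((q d/dq)^r F(q,m))(ζ) = ((q d/dq)^r F(q,(r+1)p-1))(ζ). -/
theorem euler_deriv_truncation (p : ℕ) (hp : p.Prime) (r : ℕ) (ζ : ℂ) (hζ : ζ ^ p = 1)
    (m : ℕ) (hm : (r + 1) * p ≤ m) :
    (((fun g : Polynomial ℂ => X * derivative g)^[r]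
        (∑ n ∈ Finset.range (m + 1), ∏ i ∈ Finset.range n, (1 - X ^ (i + 1)))).eval ζ) =
      (((fun g : Polynomial ℂ => X * derivative g)^[r]
        (∑ n ∈ Finset.range ((r + 1) * p - 1 + 1),
          ∏ i ∈ Finset.range n, (1 - X ^ (i + 1)))).eval ζ) := by
  have hpos : 0 < (r + 1) * p := Nat.mul_pos r.succ_pos hp.pos
  rw [Nat.sub_add_cancel hpos]
  exact eval_iterate_eulerOperator_sum_qPochhammer_eq hp.pos r hζ hm
end

section
/- Let p be a prime and let ζ be a primitive p-th root of unity in ℂ. Suppose f ∈ ℤ[q] is written as f(q) = ∑_{i=0}^{p-1} q^i φ_i(q^p) with φ_i ∈ ℤ[q], and suppose there exist integers c_λ, indexed by a set Λ ⊆ [0, p-1] of residues of generalized pentagonal numbers mod p containing 0, such that for every p-th root of unity ω (including ω = 1), f(ω) = ∑_{λ∈Λ} c_λ ω^λ, with the same c_λ for all ω. Then for every j ∈ [0, p-1] with j ∉ Λ, we have φ_j(1) = 0. -/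
/-!
At a `p`-th root of unity `ω` we have `ω ^ p = 1`, so `f(ω) = ∑_{i<p} φ_i(1) ω^i`. Both this and
`∑_{λ∈Λ} c_λ ω^λ` are sums `∑_{i<p} a_i ω^i`, and such a sum is determined by its values at the `p`
distinct `p`-th roots of unity (the Vandermonde matrix of the powers of `ζ` is invertible). Comparing
the coefficients of `ω^j` for `j ∉ Λ` gives `φ_j(1) = 0`.
-/

open Polynomial Finset

theorem Polynomial.eval₂_comp_X_pow_of_pow_eq_one {R S : Type*} [CommSemiring R] [CommSemiring S]
    (g : R →+* S) {ω : S} {n : ℕ} (hω : ω ^ n = 1) (φ : R[X]) :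
    (φ.comp (X ^ n)).eval₂ g ω = g (φ.eval 1) := by
  rw [eval₂_comp, eval₂_X_pow, hω, eval₂_at_one]

theorem IsPrimitiveRoot.eq_of_forall_pow_eq_one_sum_mul_pow_eq {K : Type*} [CommRing K]
    [IsDomain K] {ζ : K} {n : ℕ} (hζ : IsPrimitiveRoot ζ n) {a b : ℕ → K}
    (h : ∀ ω : K, ω ^ n = 1 → ∑ i ∈ range n, a i * ω ^ i = ∑ i ∈ range n, b i * ω ^ i)
    {j : ℕ} (hj : j < n) : a j = b j := by
  have hinj : Function.Injective fun k : Fin n => ζ ^ (k : ℕ) :=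
    fun k l hkl => Fin.ext (hζ.pow_inj k.isLt l.isLt hkl)
  have hvanish : (fun i : Fin n => a i - b i) = 0 := by
    refine Matrix.eq_zero_of_forall_index_sum_mul_pow_eq_zero hinj fun k => ?_
    have hk : (ζ ^ (k : ℕ)) ^ n = 1 := by
      rw [← pow_mul, mul_comm, pow_mul, hζ.pow_eq_one, one_pow]
    simp only [sub_mul, Finset.sum_sub_distrib, Fin.sum_univ_eq_sum_range
      (fun i => a i * (ζ ^ (k : ℕ)) ^ i), Fin.sum_univ_eq_sum_range
      (fun i => b i * (ζ ^ (k : ℕ)) ^ i), h _ hk, sub_self]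
  exact sub_eq_zero.mp (congrFun hvanish ⟨j, hj⟩)

theorem phi_one_eq_zero_general (p : ℕ) (hp : p.Prime)
    (f : Polynomial ℤ) (φ : ℕ → Polynomial ℤ)
    (hf : f = ∑ i ∈ Finset.range p, X ^ i * (φ i).comp (X ^ p))
    (Λ : Finset ℕ) (hΛ : Λ ⊆ Finset.range p)
    (c : ℕ → ℤ)
    (hval : ∀ ω : ℂ, ω ^ p = 1 →
      (f.map (Int.castRingHom ℂ)).eval ω = ∑ l ∈ Λ, (c l : ℂ) * ω ^ l) :
    ∀ j, j ≤ p - 1 → j ∉ Λ → (φ j).eval 1 = 0 := by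
  intro j hj hjΛ
  have hsum : ∀ ω : ℂ, ω ^ p = 1 → ∑ i ∈ range p, (((φ i).eval 1 : ℤ) : ℂ) * ω ^ i
      = ∑ i ∈ range p, (if i ∈ Λ then (c i : ℂ) else 0) * ω ^ i := by
    intro ω hω
    have hf_eval : (f.map (Int.castRingHom ℂ)).eval ω
        = ∑ i ∈ range p, (((φ i).eval 1 : ℤ) : ℂ) * ω ^ i := by
      simp only [hf, eval_map, eval₂_finsetSum, eval₂_mul, eval₂_X_pow,
        eval₂_comp_X_pow_of_pow_eq_one _ hω, eq_intCast, mul_comm]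
    have hΛ_sum : ∑ l ∈ Λ, (c l : ℂ) * ω ^ l
        = ∑ i ∈ range p, (if i ∈ Λ then (c i : ℂ) else 0) * ω ^ i := by
      simp only [ite_mul, zero_mul, sum_ite_mem, inter_eq_right.mpr hΛ]
    rw [← hf_eval, hval ω hω, hΛ_sum]
  have hjp : j < p := by have := hp.pos; omega
  simpa [hjΛ] using
    (Complex.isPrimitiveRoot_exp p hp.ne_zero).eq_of_forall_pow_eq_one_sum_mul_pow_eq hsum hjp

/-- Lemma 1: if f(q) = ∑_{i=0}^{p-1} q^i φ_i(q^p) and at every p-th root of unity ω,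
f(ω) = ∑_{λ∈Λ} c_λ ω^λ with Λ a set of residues of generalized pentagonal numbers
mod p containing 0, then φ_j(1) = 0 whenever j ∉ Λ. -/
theorem phi_one_eq_zero (p : ℕ) (hp : p.Prime)
    (f : Polynomial ℤ) (φ : ℕ → Polynomial ℤ)
    (hf : f = ∑ i ∈ Finset.range p, X ^ i * (φ i).comp (X ^ p))
    (Λ : Finset ℕ) (hΛ : Λ ⊆ Finset.range p) (h0Λ : 0 ∈ Λ)
    (hpent : ∀ l ∈ Λ, ∃ m : ℤ, m * (3 * m - 1) / 2 ≡ (l : ℤ) [ZMOD p])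
    (c : ℕ → ℤ)
    (hval : ∀ ω : ℂ, ω ^ p = 1 →
      (f.map (Int.castRingHom ℂ)).eval ω = ∑ l ∈ Λ, (c l : ℂ) * ω ^ l) :
    ∀ j, j ≤ p - 1 → j ∉ Λ → (φ j).eval 1 = 0 :=
  phi_one_eq_zero_general p hp f φ hf Λ hΛ c hval
end
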